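/- For every mixed Nash equilibrium (σ¹*,σ²*) of the routing game (p₁>α, p₂>1, Assumption 1), the expected effective value of the max-flow-min-cost flow x* under the attacker's equilibrium strategy satisfies E_{σ²*}[F((x*)^μ)] = Θ − E_{σ²*}[C₂(μ)]. -/

import Mathlib

open scoped BigOperators Classical

/-- A capacitated network given by its finite edge set, capacities, per-unit
transportation costs, and the (edge sets of its) `s`-`t` paths and loops. -/
structure Network where
  E : Type
  fin : Fintype E
  dec : DecidableEq E
  /-- edge capacities -/
  c : E → ℝ
  /-- per-unit transportation costs -/
  b : E → ℝ
  /-- the `s`-`t` paths, identified with their edge sets -/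
  P : Finset (Finset E)
  /-- the loops, identified with their edge sets -/
  L : Finset (Finset E)
  c_nonneg : ∀ e, 0 ≤ c e
  b_nonneg : ∀ e, 0 ≤ b e
  P_nonempty : P.Nonempty
  P_edges_nonempty : ∀ p ∈ P, p.Nonempty

attribute [instance] Network.fin Network.dec

namespace Network

variable (N : Network)

/-- All paths and loops. -/
noncomputable def Lam : Finset (Finset N.E) := N.P ∪ N.L

/-- The flow through edge `e` induced by the path/loop flow `y`. -/
noncomputable def edgeFlow (y : Finset N.E → ℝ) (e : N.E) : ℝ :=
  ∑ l ∈ N.Lam.filter (fun l => e ∈ l), y l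

/-- Feasibility of a path/loop flow: nonnegative, supported on paths and loops,
and respecting edge capacities. -/
def Feasible (y : Finset N.E → ℝ) : Prop :=
  (∀ l, 0 ≤ y l) ∧ (∀ l, l ∉ N.Lam → y l = 0) ∧ (∀ e, N.edgeFlow y e ≤ N.c e)

/-- The value `F(x)` of the initial flow: total flow on `s`-`t` paths. -/
noncomputable def val (y : Finset N.E → ℝ) : ℝ := ∑ p ∈ N.P, y p

/-- The value `F(x^μ)` of the effective flow after the attack `μ`:
only the flow on paths avoiding all disrupted edges survives. -/
noncomputable def effVal (y : Finset N.E → ℝ) (μ : Finset N.E) : ℝ :=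
  ∑ p ∈ N.P.filter (fun p => Disjoint p μ), y p

/-- Transportation cost `C₁(x) = Σ b_e x_e`. -/
noncomputable def C1 (y : Finset N.E → ℝ) : ℝ := ∑ e, N.b e * N.edgeFlow y e

/-- Cost of an attack, `C₂(μ) = Σ_{e ∈ μ} c_e`. -/
noncomputable def C2 (μ : Finset N.E) : ℝ := ∑ e ∈ μ, N.c e

/-- Transportation cost of a path. -/
noncomputable def pathCost (p : Finset N.E) : ℝ := ∑ e ∈ p, N.b e

/-- `α`: the minimum transportation cost over all `s`-`t` paths. -/
noncomputable def alpha : ℝ := sInf (N.pathCost '' ↑N.P)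

/-- A cut: a set of edges meeting every `s`-`t` path. -/
def IsCut (K : Finset N.E) : Prop := ∀ p ∈ N.P, ¬ Disjoint p K

/-- A minimum cut: a cut of minimum capacity. -/
def IsMinCut (K : Finset N.E) : Prop := N.IsCut K ∧ ∀ K', N.IsCut K' → N.C2 K ≤ N.C2 K'

/-- `Θ`: the maximum flow value. -/
noncomputable def Theta : ℝ := sSup (N.val '' {y | N.Feasible y})

/-- A maximum flow. -/
def IsMaxFlow (y : Finset N.E → ℝ) : Prop :=
  N.Feasible y ∧ ∀ z, N.Feasible z → N.val z ≤ N.val y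

/-- A maximum flow with minimum transportation cost (an element of `Ω`). -/
def IsMFMC (y : Finset N.E → ℝ) : Prop :=
  N.IsMaxFlow y ∧ ∀ z, N.IsMaxFlow z → N.C1 y ≤ N.C1 z

/-- Assumption 1: `x` is a max-flow with minimum transportation cost all of whose
positively used `s`-`t` paths have transportation cost exactly `α`. -/
def Assumption1 (x : Finset N.E → ℝ) : Prop :=
  N.IsMFMC x ∧ ∀ p ∈ N.P, 0 < x p → N.pathCost p = N.alpha

/-- Defender's payoff `u₁(x,μ) = p₁ F(x^μ) - C₁(x)`. -/
noncomputable def u1 (p1 : ℝ) (y : Finset N.E → ℝ) (μ : Finset N.E) : ℝ :=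
  p1 * N.effVal y μ - N.C1 y

/-- Attacker's payoff `u₂(x,μ) = p₂ F(x - x^μ) - C₂(μ)`. -/
noncomputable def u2 (p2 : ℝ) (y : Finset N.E → ℝ) (μ : Finset N.E) : ℝ :=
  p2 * (N.val y - N.effVal y μ) - N.C2 μ

/-- The defender's action set: feasible flows. -/
def Flow : Type := {y : Finset N.E → ℝ // N.Feasible y}

/-- A (finitely supported) mixed strategy of the defender. -/
def MixedF (σ : N.Flow →₀ ℝ) : Prop := (∀ y, 0 ≤ σ y) ∧ (σ.sum fun _ w => w) = 1

/-- A mixed strategy of the attacker. -/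
def MixedA (σ : Finset N.E → ℝ) : Prop := (∀ μ, 0 ≤ σ μ) ∧ ∑ μ, σ μ = 1

/-- Expectation of a function of the flow under the defender's mixed strategy. -/
noncomputable def expF (σ : N.Flow →₀ ℝ) (g : (Finset N.E → ℝ) → ℝ) : ℝ :=
  σ.sum fun y w => w * g y.1

/-- Expectation of a function of the attack under the attacker's mixed strategy. -/
noncomputable def expA (σ : Finset N.E → ℝ) (h : Finset N.E → ℝ) : ℝ :=
  ∑ μ, σ μ * h μ

/-- Expectation of a function of both actions under a mixed strategy profile. -/
noncomputable def expFA (σ1 : N.Flow →₀ ℝ) (σ2 : Finset N.E → ℝ)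
    (g : (Finset N.E → ℝ) → Finset N.E → ℝ) : ℝ :=
  σ1.sum fun y w => w * ∑ μ, σ2 μ * g y.1 μ

/-- Defender's expected payoff. -/
noncomputable def U1 (p1 : ℝ) (σ1 : N.Flow →₀ ℝ) (σ2 : Finset N.E → ℝ) : ℝ :=
  N.expFA σ1 σ2 (N.u1 p1)

/-- Attacker's expected payoff. -/
noncomputable def U2 (p2 : ℝ) (σ1 : N.Flow →₀ ℝ) (σ2 : Finset N.E → ℝ) : ℝ :=
  N.expFA σ1 σ2 (N.u2 p2)

/-- Mixed Nash equilibrium. -/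
def IsNE (p1 p2 : ℝ) (σ1 : N.Flow →₀ ℝ) (σ2 : Finset N.E → ℝ) : Prop :=
  N.MixedF σ1 ∧ N.MixedA σ2 ∧
  (∀ τ1, N.MixedF τ1 → N.U1 p1 τ1 σ2 ≤ N.U1 p1 σ1 σ2) ∧
  (∀ τ2, N.MixedA τ2 → N.U2 p2 σ1 τ2 ≤ N.U2 p2 σ1 σ2)

/-- Pure Nash equilibrium. -/
def IsPureNE (p1 p2 : ℝ) (x : Finset N.E → ℝ) (μ : Finset N.E) : Prop :=
  N.Feasible x ∧
  (∀ y, N.Feasible y → N.u1 p1 y μ ≤ N.u1 p1 x μ) ∧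
  (∀ ν, N.u2 p2 x ν ≤ N.u2 p2 x μ)

end Network

/-!
Every attack `μ` destroys at most `C₂(μ)` units of a maximum flow, since each destroyed path
crosses an edge of `μ`; averaging gives `Θ - E[C₂] ≤ E[F((x*)^μ)]`.

For the converse, compare the equilibrium payoffs with four pure deviations: the defender
switching to `x*` or to the zero flow, the attacker switching to a cut `K` with `C₂(K) = Θ` or
to the empty attack. Dropping the loop flows of `x*` keeps it a maximum flow, so minimality of
its cost and Assumption 1 give `C₁(x*) = αΘ`. The four resulting linear inequalities, weighted
by `α` and `p₁ - α`, yield `p₁ E[F((x*)^μ)] ≤ p₁ (Θ - E[C₂])`.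
-/

namespace Network

variable {N : Network}

lemma P_subset_Lam : N.P ⊆ N.Lam := Finset.subset_union_left

lemma pathCost_nonneg (l : Finset N.E) : 0 ≤ N.pathCost l :=
  Finset.sum_nonneg fun e _ => N.b_nonneg e

lemma alpha_le_pathCost {p : Finset N.E} (hp : p ∈ N.P) : N.alpha ≤ N.pathCost p :=
  csInf_le ⟨0, by rintro _ ⟨q, -, rfl⟩; exact pathCost_nonneg q⟩ ⟨p, hp, rfl⟩

lemma alpha_nonneg (N : Network) : 0 ≤ N.alpha :=
  le_csInf ((Finset.coe_nonempty.2 N.P_nonempty).image _)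
    (by rintro _ ⟨q, -, rfl⟩; exact pathCost_nonneg q)

lemma IsMaxFlow.Theta_eq {x : Finset N.E → ℝ} (hx : N.IsMaxFlow x) : N.Theta = N.val x :=
  IsGreatest.csSup_eq ⟨⟨x, hx.1, rfl⟩, by rintro _ ⟨y, hy, rfl⟩; exact hx.2 y hy⟩

lemma C1_eq_sum_mul_pathCost (y : Finset N.E → ℝ) :
    N.C1 y = ∑ l ∈ N.Lam, y l * N.pathCost l := by
  simp only [C1, edgeFlow, pathCost, Finset.mul_sum, Finset.sum_filter]
  rw [Finset.sum_comm]
  refine Finset.sum_congr rfl fun l _ => ?_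
  simp only [mul_ite, mul_zero, Finset.sum_ite_mem, Finset.univ_inter]
  exact Finset.sum_congr rfl fun e _ => mul_comm _ _

lemma alpha_mul_val_le_C1 {y : Finset N.E → ℝ} (hy : N.Feasible y) :
    N.alpha * N.val y ≤ N.C1 y :=
  calc N.alpha * N.val y = ∑ p ∈ N.P, y p * N.alpha := by
        rw [val, Finset.mul_sum]; simp only [mul_comm]
    _ ≤ ∑ p ∈ N.P, y p * N.pathCost p :=
      Finset.sum_le_sum fun p hp => mul_le_mul_of_nonneg_left (alpha_le_pathCost hp) (hy.1 p)
    _ ≤ ∑ l ∈ N.Lam, y l * N.pathCost l :=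
      Finset.sum_le_sum_of_subset_of_nonneg P_subset_Lam
        fun l _ _ => mul_nonneg (hy.1 l) (pathCost_nonneg l)
    _ = N.C1 y := (C1_eq_sum_mul_pathCost y).symm

noncomputable def pathPart (y : Finset N.E → ℝ) : Finset N.E → ℝ :=
  fun l => if l ∈ N.P then y l else 0

lemma Feasible.pathPart {y : Finset N.E → ℝ} (hy : N.Feasible y) : N.Feasible (N.pathPart y) := by
  have hbounds : ∀ l, 0 ≤ N.pathPart y l ∧ N.pathPart y l ≤ y l := fun l => by
    unfold Network.pathPart; split_ifs <;> simp [hy.1 l]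
  refine ⟨fun l => (hbounds l).1, fun l hl => if_neg fun h => hl (P_subset_Lam h), fun e => ?_⟩
  exact (Finset.sum_le_sum fun l _ => (hbounds l).2).trans (hy.2.2 e)

lemma val_pathPart (y : Finset N.E → ℝ) : N.val (N.pathPart y) = N.val y :=
  Finset.sum_congr rfl fun _ hp => if_pos hp

lemma C1_pathPart (y : Finset N.E → ℝ) :
    N.C1 (N.pathPart y) = ∑ p ∈ N.P, y p * N.pathCost p := by
  simp only [C1_eq_sum_mul_pathCost, pathPart, ite_mul, zero_mul, Finset.sum_ite_mem,
    Finset.inter_eq_right.2 P_subset_Lam]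

lemma Assumption1.C1_eq_alpha_mul_Theta {x : Finset N.E → ℝ} (hx : N.Assumption1 x) :
    N.C1 x = N.alpha * N.Theta := by
  obtain ⟨⟨hmax, hmin⟩, hcost⟩ := hx
  rw [hmax.Theta_eq]
  refine le_antisymm ?_ (alpha_mul_val_le_C1 hmax.1)
  have hmax' : N.IsMaxFlow (N.pathPart x) :=
    ⟨hmax.1.pathPart, fun z hz => (val_pathPart x).symm ▸ hmax.2 z hz⟩
  calc N.C1 x ≤ N.C1 (N.pathPart x) := hmin _ hmax'
    _ = ∑ p ∈ N.P, x p * N.alpha := by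
      rw [C1_pathPart]
      refine Finset.sum_congr rfl fun p hp => ?_
      rcases (hmax.1.1 p).eq_or_lt with h | h
      · rw [← h, zero_mul, zero_mul]
      · rw [hcost p hp h]
    _ = N.alpha * N.val x := by rw [val, Finset.mul_sum]; simp only [mul_comm]

lemma val_sub_effVal_le_C2 {y : Finset N.E → ℝ} (hy : N.Feasible y) (μ : Finset N.E) :
    N.val y - N.effVal y μ ≤ N.C2 μ := by
  set S := N.P.filter (fun p => ¬ Disjoint p μ)
  have hlost : N.val y - N.effVal y μ = ∑ p ∈ S, y p := by
    rw [val, effVal, ← Finset.sum_filter_add_sum_filter_not N.P (fun p => Disjoint p μ)]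
    ring
  calc N.val y - N.effVal y μ = ∑ p ∈ S, y p := hlost
    _ ≤ ∑ p ∈ S, ∑ e ∈ μ.filter (· ∈ p), y p := Finset.sum_le_sum fun p hp => by
        obtain ⟨e, hep, heμ⟩ := Finset.not_disjoint_iff.1 (Finset.mem_filter.1 hp).2
        exact Finset.single_le_sum (f := fun _ => y p) (fun _ _ => hy.1 p)
          (Finset.mem_filter.2 ⟨heμ, hep⟩)
    _ = ∑ e ∈ μ, ∑ p ∈ S.filter (e ∈ ·), y p :=
        Finset.sum_comm' fun p e => by simp only [Finset.mem_filter]; tauto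
    _ ≤ ∑ e ∈ μ, N.c e := Finset.sum_le_sum fun e _ => by
        refine (Finset.sum_le_sum_of_subset_of_nonneg ?_ fun l _ _ => hy.1 l).trans (hy.2.2 e)
        intro p hp
        simp only [S, Finset.mem_filter] at hp ⊢
        exact ⟨P_subset_Lam hp.1.1, hp.2⟩

lemma IsCut.effVal_eq_zero {K : Finset N.E} (hK : N.IsCut K) (y : Finset N.E → ℝ) :
    N.effVal y K = 0 := by
  rw [effVal, Finset.filter_false_of_mem hK, Finset.sum_empty]

lemma effVal_empty (y : Finset N.E → ℝ) : N.effVal y ∅ = N.val y := by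
  rw [effVal, val, Finset.filter_true_of_mem fun p _ => Finset.disjoint_empty_right p]

lemma feasible_zero : N.Feasible 0 :=
  ⟨fun _ => le_rfl, fun _ _ => rfl, fun e => (Finset.sum_const_zero).trans_le (N.c_nonneg e)⟩

lemma u1_zero (p1 : ℝ) : N.u1 p1 0 = fun _ => 0 := by
  funext μ
  simp [u1, effVal, C1, edgeFlow]

lemma u2_empty (p2 : ℝ) (y : Finset N.E → ℝ) : N.u2 p2 y ∅ = 0 := by
  simp [u2, effVal_empty, C2]

section Expectation

variable {σ : Finset N.E → ℝ} {τ : N.Flow →₀ ℝ}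

lemma expA_sub (σ : Finset N.E → ℝ) (f g : Finset N.E → ℝ) :
    N.expA σ (fun μ => f μ - g μ) = N.expA σ f - N.expA σ g := by
  simp only [expA, mul_sub, Finset.sum_sub_distrib]

lemma expA_mul_left (σ : Finset N.E → ℝ) (a : ℝ) (f : Finset N.E → ℝ) :
    N.expA σ (fun μ => a * f μ) = a * N.expA σ f := by
  simp only [expA, Finset.mul_sum, mul_left_comm]

lemma MixedA.expA_const (hσ : N.MixedA σ) (a : ℝ) : N.expA σ (fun _ => a) = a := by
  rw [expA, ← Finset.sum_mul, hσ.2, one_mul]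

lemma MixedA.expA_mono (hσ : N.MixedA σ) {f g : Finset N.E → ℝ} (hfg : ∀ μ, f μ ≤ g μ) :
    N.expA σ f ≤ N.expA σ g :=
  Finset.sum_le_sum fun μ _ => mul_le_mul_of_nonneg_left (hfg μ) (hσ.1 μ)

lemma expA_pi_single (μ : Finset N.E) (f : Finset N.E → ℝ) :
    N.expA (Pi.single μ 1) f = f μ := by
  simp [expA, Pi.single_apply]

lemma mixedA_pi_single (μ : Finset N.E) : N.MixedA (Pi.single μ 1) := by
  refine ⟨fun ν => ?_, by simp [Pi.single_apply]⟩
  rw [Pi.single_apply]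
  split_ifs <;> norm_num

lemma expF_sub (τ : N.Flow →₀ ℝ) (f g : (Finset N.E → ℝ) → ℝ) :
    N.expF τ (fun y => f y - g y) = N.expF τ f - N.expF τ g := by
  simp only [expF, Finsupp.sum, mul_sub, Finset.sum_sub_distrib]

lemma expF_mul_left (τ : N.Flow →₀ ℝ) (a : ℝ) (f : (Finset N.E → ℝ) → ℝ) :
    N.expF τ (fun y => a * f y) = a * N.expF τ f := by
  simp only [expF, Finsupp.sum, Finset.mul_sum, mul_left_comm]

lemma MixedF.expF_const (hτ : N.MixedF τ) (a : ℝ) : N.expF τ (fun _ => a) = a := by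
  rw [expF, Finsupp.sum, ← Finset.sum_mul]
  exact (congrArg (· * a) hτ.2).trans (one_mul a)

lemma MixedF.expF_mono (hτ : N.MixedF τ) {f g : (Finset N.E → ℝ) → ℝ}
    (hfg : ∀ y : N.Flow, f y.1 ≤ g y.1) : N.expF τ f ≤ N.expF τ g :=
  Finset.sum_le_sum fun y _ => mul_le_mul_of_nonneg_left (hfg y) (hτ.1 y)

lemma expF_single (x : N.Flow) (f : (Finset N.E → ℝ) → ℝ) :
    N.expF (Finsupp.single x 1) f = f x.1 := by
  rw [expF, Finsupp.sum_single_index (zero_mul _), one_mul]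

lemma mixedF_single (x : N.Flow) : N.MixedF (Finsupp.single x 1) := by
  refine ⟨fun y => ?_, Finsupp.sum_single_index rfl⟩
  rw [Finsupp.single_apply]
  split_ifs <;> norm_num

lemma expF_expA_comm (τ : N.Flow →₀ ℝ) (σ : Finset N.E → ℝ)
    (g : (Finset N.E → ℝ) → Finset N.E → ℝ) :
    N.expF τ (fun y => N.expA σ (g y)) = N.expA σ (fun μ => N.expF τ (fun y => g y μ)) := by
  simp only [expF, expA, Finsupp.sum, Finset.mul_sum]
  rw [Finset.sum_comm]
  simp only [mul_left_comm]

end Expectation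

section Equilibrium

variable {p1 p2 : ℝ} {σ1 : N.Flow →₀ ℝ} {σ2 : Finset N.E → ℝ}

lemma U1_eq_expF_expA (p1 : ℝ) (σ1 : N.Flow →₀ ℝ) (σ2 : Finset N.E → ℝ) :
    N.U1 p1 σ1 σ2 = N.expF σ1 (fun y => N.expA σ2 (N.u1 p1 y)) := rfl

lemma U2_eq_expF_expA (p2 : ℝ) (σ1 : N.Flow →₀ ℝ) (σ2 : Finset N.E → ℝ) :
    N.U2 p2 σ1 σ2 = N.expF σ1 (fun y => N.expA σ2 (N.u2 p2 y)) := rfl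

lemma IsNE.expA_u1_le_U1 (h : N.IsNE p1 p2 σ1 σ2) (x : N.Flow) :
    N.expA σ2 (N.u1 p1 x.1) ≤ N.U1 p1 σ1 σ2 := by
  simpa only [U1_eq_expF_expA, expF_single] using h.2.2.1 _ (mixedF_single x)

lemma IsNE.expF_u2_le_U2 (h : N.IsNE p1 p2 σ1 σ2) (μ : Finset N.E) :
    N.expF σ1 (fun y => N.u2 p2 y μ) ≤ N.U2 p2 σ1 σ2 := by
  simpa only [U2_eq_expF_expA, expF_expA_comm, expA_pi_single]
    using h.2.2.2 _ (mixedA_pi_single μ)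

lemma MixedA.expA_u1 (hσ2 : N.MixedA σ2) (p1 : ℝ) (y : Finset N.E → ℝ) :
    N.expA σ2 (N.u1 p1 y) = p1 * N.expA σ2 (N.effVal y) - N.C1 y := by
  change N.expA σ2 (fun μ => p1 * N.effVal y μ - N.C1 y) = _
  rw [expA_sub, expA_mul_left, hσ2.expA_const]

lemma MixedA.expA_u2 (hσ2 : N.MixedA σ2) (p2 : ℝ) (y : Finset N.E → ℝ) :
    N.expA σ2 (N.u2 p2 y) = p2 * (N.val y - N.expA σ2 (N.effVal y)) - N.expA σ2 N.C2 := by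
  change N.expA σ2 (fun μ => p2 * (N.val y - N.effVal y μ) - N.C2 μ) = _
  rw [expA_sub, expA_mul_left, expA_sub, hσ2.expA_const]

lemma MixedA.U1_eq (hσ2 : N.MixedA σ2) (p1 : ℝ) (σ1 : N.Flow →₀ ℝ) :
    N.U1 p1 σ1 σ2 = p1 * N.expFA σ1 σ2 N.effVal - N.expF σ1 N.C1 := by
  simp only [U1_eq_expF_expA, hσ2.expA_u1]
  rw [expF_sub, expF_mul_left]
  rfl

lemma U2_eq (hσ1 : N.MixedF σ1) (hσ2 : N.MixedA σ2) (p2 : ℝ) :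
    N.U2 p2 σ1 σ2 = p2 * (N.expF σ1 N.val - N.expFA σ1 σ2 N.effVal) - N.expA σ2 N.C2 := by
  simp only [U2_eq_expF_expA, hσ2.expA_u2]
  rw [expF_sub, expF_mul_left, expF_sub, hσ1.expF_const]
  rfl

lemma MixedA.Theta_sub_expA_C2_le {σ : Finset N.E → ℝ} (hσ : N.MixedA σ)
    {x : Finset N.E → ℝ} (hx : N.IsMaxFlow x) :
    N.Theta - N.expA σ N.C2 ≤ N.expA σ (N.effVal x) := by
  have h := hσ.expA_mono (f := fun μ => N.Theta - N.C2 μ) (g := N.effVal x) fun μ => by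
    linarith [val_sub_effVal_le_C2 hx.1 μ, hx.Theta_eq]
  rwa [expA_sub, hσ.expA_const] at h

lemma IsNE.expA_effVal_le (h : N.IsNE p1 p2 σ1 σ2) (hp1 : N.alpha < p1) (hp2 : 1 ≤ p2)
    {x : N.Flow} (hx : N.Assumption1 x.1) {K : Finset N.E} (hK : N.IsCut K)
    (hKΘ : N.C2 K = N.Theta) :
    N.expA σ2 (N.effVal x.1) ≤ N.Theta - N.expA σ2 N.C2 := by
  have hσ1 := h.1
  have hσ2 := h.2.1
  have hdev_x := h.expA_u1_le_U1 x
  have hdev_zero := h.expA_u1_le_U1 ⟨0, feasible_zero⟩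
  have hdev_K := h.expF_u2_le_U2 K
  have hdev_empty := h.expF_u2_le_U2 ∅
  rw [hσ2.expA_u1, hx.C1_eq_alpha_mul_Theta, hσ2.U1_eq] at hdev_x
  rw [u1_zero, hσ2.expA_const, hσ2.U1_eq] at hdev_zero
  simp only [u2, hK.effVal_eq_zero, hKΘ, sub_zero, expF_sub, expF_mul_left, hσ1.expF_const,
    U2_eq hσ1 hσ2] at hdev_K
  simp only [u2_empty, hσ1.expF_const, U2_eq hσ1 hσ2] at hdev_empty
  have hαF : N.alpha * N.expF σ1 N.val ≤ N.expF σ1 N.C1 := by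
    rw [← expF_mul_left]
    exact hσ1.expF_mono fun y => alpha_mul_val_le_C1 y.2
  set F := N.expF σ1 N.val
  set G := N.expFA σ1 σ2 N.effVal
  set Ca := N.expA σ2 N.C2
  have hA : N.Theta - p2 * F + p2 * G ≤ N.Theta - Ca := by linarith
  have hB : p2 * G ≤ N.Theta - Ca := by linarith
  refine le_of_mul_le_mul_left ?_ (N.alpha_nonneg.trans_lt hp1)
  -- Weighting `hA` by `α` and `hB` by `p1 - α` dominates the defender's bound `hdev_x`:
  -- the difference is `(p2 - 1) * (p1 * G - α * F) ≥ 0`.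
  linarith [mul_le_mul_of_nonneg_left hA N.alpha_nonneg,
    mul_le_mul_of_nonneg_left hB (sub_nonneg.2 hp1.le),
    mul_nonneg (sub_nonneg.2 hp2) (by linarith : 0 ≤ p1 * G - N.alpha * F)]

end Equilibrium

end Network

/-- at every mixed Nash equilibrium (`p₁ > α`, `p₂ > 1`, Assumption 1),
the expected effective value of the max-flow-min-cost flow `x*` under the attacker's
equilibrium strategy satisfies `E_{σ²*}[F((x*)^μ)] = Θ − E_{σ²*}[C₂(μ)]`. -/
theorem expected_effective_value_of_mfmc_flow (N : Network) (p1 p2 : ℝ)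
    (hp1 : N.alpha < p1) (hp2 : 1 < p2)
    (xs : N.Flow) (hxs : N.Assumption1 xs.1)
    (hMFMC : ∃ K, N.IsMinCut K ∧ N.C2 K = N.Theta)
    (σ1 : N.Flow →₀ ℝ) (σ2 : Finset N.E → ℝ)
    (hNE : N.IsNE p1 p2 σ1 σ2) :
    N.expA σ2 (fun μ => N.effVal xs.1 μ) = N.Theta - N.expA σ2 N.C2 := by
  obtain ⟨K, ⟨hK, -⟩, hKΘ⟩ := hMFMC
  exact le_antisymm (hNE.expA_effVal_le hp1 hp2.le hxs hK hKΘ)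
    (hNE.2.1.Theta_sub_expA_C2_le hxs.1.1)
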